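/- Suppose a tetrahedron in a face-generic triangulation has n pairwise distinct edges in the quotient. Then n ∈ {3,4,5,6}, and the multiset of partition-types of its three twisted squares is: n=6 ⟹ AAA; n=5 ⟹ AAC or ABB; n=4 ⟹ AAF, ABE, ACC, BBC or BBD; n=3 ⟹ BBF, BDE or DDD. In particular n = 2 forces type DEE which requires four Möbius faces and is excluded. -/
import Mathlib


/-!
Combinatorial model of a tetrahedron in a face-generic triangulation.
The six edge slots of the tetrahedron (with vertices 0,1,2,3) are indexed by
`Fin 6` as: 0 ↦ edge 01, 1 ↦ edge 02, 2 ↦ edge 03, 3 ↦ edge 23, 4 ↦ edge 13,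
5 ↦ edge 12.  An edge identification is a colouring `c : Fin 6 → ℕ` (two slots
are identified iff they have the same colour).  The three twisted squares, with
their four edge slots in cyclic order, are
S1 = (0,5,3,2), S2 = (0,4,3,1), S3 = (1,5,4,2), and the four faces have edge
slots {0,5,1}, {0,4,2}, {1,3,2}, {5,3,4}.
-/

section SquareTypes

variable {α : Type*}

/-- Type A (abcd): all four labels distinct. -/
def sqA (x0 x1 x2 x3 : α) : Prop :=
  x0 ≠ x1 ∧ x0 ≠ x2 ∧ x0 ≠ x3 ∧ x1 ≠ x2 ∧ x1 ≠ x3 ∧ x2 ≠ x3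

/-- Type B (abac): exactly one pair identified, at opposite positions of the square. -/
def sqB (x0 x1 x2 x3 : α) : Prop :=
  (x0 = x2 ∧ x0 ≠ x1 ∧ x0 ≠ x3 ∧ x1 ≠ x3) ∨ (x1 = x3 ∧ x1 ≠ x0 ∧ x1 ≠ x2 ∧ x0 ≠ x2)

/-- Type C (aabc): exactly one pair identified, at adjacent positions. -/
def sqC (x0 x1 x2 x3 : α) : Prop :=
  (x0 = x1 ∧ x0 ≠ x2 ∧ x0 ≠ x3 ∧ x2 ≠ x3) ∨ (x1 = x2 ∧ x1 ≠ x3 ∧ x1 ≠ x0 ∧ x3 ≠ x0) ∨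
  (x2 = x3 ∧ x2 ≠ x0 ∧ x2 ≠ x1 ∧ x0 ≠ x1) ∨ (x3 = x0 ∧ x3 ≠ x1 ∧ x3 ≠ x2 ∧ x1 ≠ x2)

/-- Type D (abab): both opposite pairs identified. -/
def sqD (x0 x1 x2 x3 : α) : Prop := x0 = x2 ∧ x1 = x3 ∧ x0 ≠ x1

/-- Type E (aaab): exactly three labels identified. -/
def sqE (x0 x1 x2 x3 : α) : Prop :=
  (x0 = x1 ∧ x1 = x2 ∧ x0 ≠ x3) ∨ (x1 = x2 ∧ x2 = x3 ∧ x1 ≠ x0) ∨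
  (x2 = x3 ∧ x3 = x0 ∧ x2 ≠ x1) ∨ (x3 = x0 ∧ x0 = x1 ∧ x3 ≠ x2)

/-- Type F (aabb): two adjacent pairs identified. -/
def sqF (x0 x1 x2 x3 : α) : Prop :=
  (x0 = x1 ∧ x2 = x3 ∧ x0 ≠ x2) ∨ (x1 = x2 ∧ x3 = x0 ∧ x1 ≠ x3)

/-- Type G (aaaa): all four labels identified. -/
def sqG (x0 x1 x2 x3 : α) : Prop := x0 = x1 ∧ x1 = x2 ∧ x2 = x3

end SquareTypes

/-- The seven partition types of twisted squares. -/
inductive SqT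
  | A | B | C | D | E | F | G
deriving DecidableEq

open Classical in
/-- The partition type of a square with edge labels `x0 x1 x2 x3` in cyclic
order. -/
noncomputable def typeOf (x0 x1 x2 x3 : ℕ) : SqT :=
  if sqG x0 x1 x2 x3 then .G
  else if sqF x0 x1 x2 x3 then .F
  else if sqE x0 x1 x2 x3 then .E
  else if sqD x0 x1 x2 x3 then .D
  else if sqC x0 x1 x2 x3 then .C
  else if sqB x0 x1 x2 x3 then .B
  else .A

/-- A face with edge labels `x y z` is a Möbius face iff exactly two of its
three edge slots are identified. -/
def mob (x y z : ℕ) : Prop := (x = y ∧ x ≠ z) ∨ (x = z ∧ x ≠ y) ∨ (y = z ∧ y ≠ x)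


section Aux

instance {α} [DecidableEq α] (x0 x1 x2 x3 : α) : Decidable (sqB x0 x1 x2 x3) := by unfold sqB; infer_instance
instance {α} [DecidableEq α] (x0 x1 x2 x3 : α) : Decidable (sqC x0 x1 x2 x3) := by unfold sqC; infer_instance
instance {α} [DecidableEq α] (x0 x1 x2 x3 : α) : Decidable (sqD x0 x1 x2 x3) := by unfold sqD; infer_instance
instance {α} [DecidableEq α] (x0 x1 x2 x3 : α) : Decidable (sqE x0 x1 x2 x3) := by unfold sqE; infer_instance
instance {α} [DecidableEq α] (x0 x1 x2 x3 : α) : Decidable (sqF x0 x1 x2 x3) := by unfold sqF; infer_instance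
instance {α} [DecidableEq α] (x0 x1 x2 x3 : α) : Decidable (sqG x0 x1 x2 x3) := by unfold sqG; infer_instance

-- computable version
def typeOf' (x0 x1 x2 x3 : ℕ) : SqT :=
  if sqG x0 x1 x2 x3 then .G
  else if sqF x0 x1 x2 x3 then .F
  else if sqE x0 x1 x2 x3 then .E
  else if sqD x0 x1 x2 x3 then .D
  else if sqC x0 x1 x2 x3 then .C
  else if sqB x0 x1 x2 x3 then .B
  else .A

lemma typeOf_eq (a b c d : ℕ) : typeOf a b c d = typeOf' a b c d := by
  unfold typeOf typeOf'; congr!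

lemma typeOf'_congr {x0 x1 x2 x3 y0 y1 y2 y3 : ℕ}
    (h01 : x0 = x1 ↔ y0 = y1) (h02 : x0 = x2 ↔ y0 = y2) (h03 : x0 = x3 ↔ y0 = y3)
    (h12 : x1 = x2 ↔ y1 = y2) (h13 : x1 = x3 ↔ y1 = y3) (h23 : x2 = x3 ↔ y2 = y3) :
    typeOf' x0 x1 x2 x3 = typeOf' y0 y1 y2 y3 := by
  have h10 : x1 = x0 ↔ y1 = y0 := eq_comm.trans (h01.trans eq_comm)
  have h20 : x2 = x0 ↔ y2 = y0 := eq_comm.trans (h02.trans eq_comm)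
  have h30 : x3 = x0 ↔ y3 = y0 := eq_comm.trans (h03.trans eq_comm)
  have h21 : x2 = x1 ↔ y2 = y1 := eq_comm.trans (h12.trans eq_comm)
  have h31 : x3 = x1 ↔ y3 = y1 := eq_comm.trans (h13.trans eq_comm)
  have h32 : x3 = x2 ↔ y3 = y2 := eq_comm.trans (h23.trans eq_comm)
  unfold typeOf' sqG sqF sqE sqD sqC sqB
  simp only [ne_eq, h01, h02, h03, h12, h13, h23, h10, h20, h30, h21, h31, h32]

lemma mob_congr {x y z x' y' z' : ℕ}
    (h1 : x = y ↔ x' = y') (h2 : x = z ↔ x' = z') (h3 : y = z ↔ y' = z') :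
    mob x y z ↔ mob x' y' z' := by
  have h3' : y = x ↔ y' = x' := eq_comm.trans (h1.trans eq_comm)
  unfold mob
  simp only [ne_eq, h1, h2, h3, h3']

def normC (c : Fin 6 → ℕ) (i : Fin 6) : Fin 6 :=
  (Finset.univ.filter (fun j => c j = c i)).min' ⟨i, by simp⟩

lemma c_normC (c : Fin 6 → ℕ) (i : Fin 6) : c (normC c i) = c i := by
  have := Finset.min'_mem (Finset.univ.filter (fun j => c j = c i)) ⟨i, by simp⟩
  exact (Finset.mem_filter.mp this).2

lemma normC_le (c : Fin 6 → ℕ) (i : Fin 6) : normC c i ≤ i :=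
  Finset.min'_le _ i (by simp)

lemma normC_iff (c : Fin 6 → ℕ) (i j : Fin 6) : c i = c j ↔ normC c i = normC c j := by
  constructor
  · intro h
    unfold normC
    have hs : (Finset.univ.filter fun k => c k = c i) = (Finset.univ.filter fun k => c k = c j) := by
      apply Finset.filter_congr; intro k _; simp [h]
    simp only [hs]
  · intro h
    have := c_normC c i
    rw [h, c_normC c j] at this
    exact this.symm

lemma card_normC (c : Fin 6 → ℕ) :
    (Finset.univ.image c).card = (Finset.univ.image (normC c)).card := by
  have hcomp : (fun i => c (normC c i)) = c := funext (c_normC c)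
  have h1 : Finset.univ.image c = (Finset.univ.image (normC c)).image c := by
    rw [Finset.image_image]
    conv_lhs => rw [← hcomp]
    rfl
  rw [h1, Finset.card_image_of_injOn]
  intro a ha b hb hab
  simp only [Finset.coe_image, Set.mem_image] at ha hb
  obtain ⟨i, -, rfl⟩ := ha
  obtain ⟨j, -, rfl⟩ := hb
  rw [c_normC c i, c_normC c j] at hab
  exact (normC_iff c i j).mp hab


instance (x y z : ℕ) : Decidable (mob x y z) := by unfold mob; infer_instance

set_option maxRecDepth 100000 in
set_option synthInstance.maxSize 2000 in
set_option synthInstance.maxHeartbeats 2000000 in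
set_option maxHeartbeats 4000000 in
lemma key : ∀ x0 : Fin 6, x0 ≤ 0 → ∀ x1 : Fin 6, x1 ≤ 1 → ∀ x2 : Fin 6, x2 ≤ 2 →
    ∀ x3 : Fin 6, x3 ≤ 3 → ∀ x4 : Fin 6, x4 ≤ 4 → ∀ x5 : Fin 6,
    ¬(x0 = x5 ∧ x5 = x1) → ¬(x0 = x4 ∧ x4 = x2) →
    ¬(x1 = x3 ∧ x3 = x2) → ¬(x5 = x3 ∧ x3 = x4) →
    (¬(mob ↑x0 ↑x5 ↑x1 ∧ mob ↑x0 ↑x4 ↑x2 ∧ mob ↑x1 ↑x3 ↑x2) ∧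
     ¬(mob ↑x0 ↑x5 ↑x1 ∧ mob ↑x0 ↑x4 ↑x2 ∧ mob ↑x5 ↑x3 ↑x4) ∧
     ¬(mob ↑x0 ↑x5 ↑x1 ∧ mob ↑x1 ↑x3 ↑x2 ∧ mob ↑x5 ↑x3 ↑x4) ∧
     ¬(mob ↑x0 ↑x4 ↑x2 ∧ mob ↑x1 ↑x3 ↑x2 ∧ mob ↑x5 ↑x3 ↑x4)) →
    (3 ≤ ({x0, x1, x2, x3, x4, x5} : Finset (Fin 6)).card ∧ ({x0, x1, x2, x3, x4, x5} : Finset (Fin 6)).card ≤ 6) ∧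
    (({x0, x1, x2, x3, x4, x5} : Finset (Fin 6)).card = 6 → ({typeOf' ↑x0 ↑x5 ↑x3 ↑x2, typeOf' ↑x0 ↑x4 ↑x3 ↑x1, typeOf' ↑x1 ↑x5 ↑x4 ↑x2} : Multiset SqT) = {SqT.A, SqT.A, SqT.A}) ∧
    (({x0, x1, x2, x3, x4, x5} : Finset (Fin 6)).card = 5 → ({typeOf' ↑x0 ↑x5 ↑x3 ↑x2, typeOf' ↑x0 ↑x4 ↑x3 ↑x1, typeOf' ↑x1 ↑x5 ↑x4 ↑x2} : Multiset SqT) = {SqT.A, SqT.A, SqT.C} ∨ ({typeOf' ↑x0 ↑x5 ↑x3 ↑x2, typeOf' ↑x0 ↑x4 ↑x3 ↑x1, typeOf' ↑x1 ↑x5 ↑x4 ↑x2} : Multiset SqT) = {SqT.A, SqT.B, SqT.B}) ∧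
    (({x0, x1, x2, x3, x4, x5} : Finset (Fin 6)).card = 4 → ({typeOf' ↑x0 ↑x5 ↑x3 ↑x2, typeOf' ↑x0 ↑x4 ↑x3 ↑x1, typeOf' ↑x1 ↑x5 ↑x4 ↑x2} : Multiset SqT) = {SqT.A, SqT.A, SqT.F} ∨ ({typeOf' ↑x0 ↑x5 ↑x3 ↑x2, typeOf' ↑x0 ↑x4 ↑x3 ↑x1, typeOf' ↑x1 ↑x5 ↑x4 ↑x2} : Multiset SqT) = {SqT.A, SqT.B, SqT.E} ∨
      ({typeOf' ↑x0 ↑x5 ↑x3 ↑x2, typeOf' ↑x0 ↑x4 ↑x3 ↑x1, typeOf' ↑x1 ↑x5 ↑x4 ↑x2} : Multiset SqT) = {SqT.A, SqT.C, SqT.C} ∨ ({typeOf' ↑x0 ↑x5 ↑x3 ↑x2, typeOf' ↑x0 ↑x4 ↑x3 ↑x1, typeOf' ↑x1 ↑x5 ↑x4 ↑x2} : Multiset SqT) = {SqT.B, SqT.B, SqT.C} ∨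
      ({typeOf' ↑x0 ↑x5 ↑x3 ↑x2, typeOf' ↑x0 ↑x4 ↑x3 ↑x1, typeOf' ↑x1 ↑x5 ↑x4 ↑x2} : Multiset SqT) = {SqT.B, SqT.B, SqT.D}) ∧
    (({x0, x1, x2, x3, x4, x5} : Finset (Fin 6)).card = 3 → ({typeOf' ↑x0 ↑x5 ↑x3 ↑x2, typeOf' ↑x0 ↑x4 ↑x3 ↑x1, typeOf' ↑x1 ↑x5 ↑x4 ↑x2} : Multiset SqT) = {SqT.B, SqT.B, SqT.F} ∨ ({typeOf' ↑x0 ↑x5 ↑x3 ↑x2, typeOf' ↑x0 ↑x4 ↑x3 ↑x1, typeOf' ↑x1 ↑x5 ↑x4 ↑x2} : Multiset SqT) = {SqT.B, SqT.D, SqT.E} ∨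
      ({typeOf' ↑x0 ↑x5 ↑x3 ↑x2, typeOf' ↑x0 ↑x4 ↑x3 ↑x1, typeOf' ↑x1 ↑x5 ↑x4 ↑x2} : Multiset SqT) = {SqT.D, SqT.D, SqT.D}) := by
  decide

lemma image_univ_fin6 {β : Type*} [DecidableEq β] (d : Fin 6 → β) :
    Finset.univ.image d = {d 0, d 1, d 2, d 3, d 4, d 5} := by
  have h : (Finset.univ : Finset (Fin 6)) = {0, 1, 2, 3, 4, 5} := by decide
  rw [h]
  simp [Finset.image_insert]

end Aux


/-- Classification of tetrahedra in a face-generic triangulation: if no face has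
all three edges identified and at most two of the four faces are Möbius faces,
then the number `n` of distinct edges of the tetrahedron satisfies `3 ≤ n ≤ 6`,
and the multiset of partition types of the three twisted squares is:
AAA if n = 6; AAC or ABB if n = 5; AAF, ABE, ACC, BBC or BBD if n = 4;
BBF, BDE or DDD if n = 3.  (In particular n = 2, which would force type DEE and
four Möbius faces, is excluded.) -/

theorem stmt14 (c : Fin 6 → ℕ)
    (hf1 : ¬(c 0 = c 5 ∧ c 5 = c 1)) (hf2 : ¬(c 0 = c 4 ∧ c 4 = c 2))
    (hf3 : ¬(c 1 = c 3 ∧ c 3 = c 2)) (hf4 : ¬(c 5 = c 3 ∧ c 3 = c 4))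
    (hmob :
      ¬(mob (c 0) (c 5) (c 1) ∧ mob (c 0) (c 4) (c 2) ∧ mob (c 1) (c 3) (c 2)) ∧
      ¬(mob (c 0) (c 5) (c 1) ∧ mob (c 0) (c 4) (c 2) ∧ mob (c 5) (c 3) (c 4)) ∧
      ¬(mob (c 0) (c 5) (c 1) ∧ mob (c 1) (c 3) (c 2) ∧ mob (c 5) (c 3) (c 4)) ∧
      ¬(mob (c 0) (c 4) (c 2) ∧ mob (c 1) (c 3) (c 2) ∧ mob (c 5) (c 3) (c 4))) :
    let n := (Finset.univ.image c).card
    let T : Multiset SqT :=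
      {typeOf (c 0) (c 5) (c 3) (c 2), typeOf (c 0) (c 4) (c 3) (c 1),
        typeOf (c 1) (c 5) (c 4) (c 2)}
    (3 ≤ n ∧ n ≤ 6) ∧
    (n = 6 → T = {SqT.A, SqT.A, SqT.A}) ∧
    (n = 5 → T = {SqT.A, SqT.A, SqT.C} ∨ T = {SqT.A, SqT.B, SqT.B}) ∧
    (n = 4 → T = {SqT.A, SqT.A, SqT.F} ∨ T = {SqT.A, SqT.B, SqT.E} ∨
      T = {SqT.A, SqT.C, SqT.C} ∨ T = {SqT.B, SqT.B, SqT.C} ∨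
      T = {SqT.B, SqT.B, SqT.D}) ∧
    (n = 3 → T = {SqT.B, SqT.B, SqT.F} ∨ T = {SqT.B, SqT.D, SqT.E} ∨
      T = {SqT.D, SqT.D, SqT.D}) := by
  intro n T
  set d : Fin 6 → Fin 6 := normC c with hd
  have ciff : ∀ i j : Fin 6, (c i = c j) ↔ ((d i : ℕ) = (d j : ℕ)) := fun i j =>
    (normC_iff c i j).trans Fin.val_inj.symm
  have fiff : ∀ i j : Fin 6, (c i = c j) ↔ (d i = d j) := fun i j => normC_iff c i j
  obtain ⟨H1, H2, H3, H4, H5⟩ :=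
    key (d 0) (normC_le c 0) (d 1) (normC_le c 1) (d 2) (normC_le c 2)
      (d 3) (normC_le c 3) (d 4) (normC_le c 4) (d 5)
      (by rw [← fiff 0 5, ← fiff 5 1]; exact hf1)
      (by rw [← fiff 0 4, ← fiff 4 2]; exact hf2)
      (by rw [← fiff 1 3, ← fiff 3 2]; exact hf3)
      (by rw [← fiff 5 3, ← fiff 3 4]; exact hf4)
      (by
        have m1 : mob (c 0) (c 5) (c 1) ↔ mob ↑(d 0) ↑(d 5) ↑(d 1) :=
          mob_congr (ciff 0 5) (ciff 0 1) (ciff 5 1)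
        have m2 : mob (c 0) (c 4) (c 2) ↔ mob ↑(d 0) ↑(d 4) ↑(d 2) :=
          mob_congr (ciff 0 4) (ciff 0 2) (ciff 4 2)
        have m3 : mob (c 1) (c 3) (c 2) ↔ mob ↑(d 1) ↑(d 3) ↑(d 2) :=
          mob_congr (ciff 1 3) (ciff 1 2) (ciff 3 2)
        have m4 : mob (c 5) (c 3) (c 4) ↔ mob ↑(d 5) ↑(d 3) ↑(d 4) :=
          mob_congr (ciff 5 3) (ciff 5 4) (ciff 3 4)
        rw [← m1, ← m2, ← m3, ← m4]
        exact hmob)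
  have hn : n = ({d 0, d 1, d 2, d 3, d 4, d 5} : Finset (Fin 6)).card := by
    show (Finset.univ.image c).card = _
    rw [card_normC]
    exact congrArg Finset.card (image_univ_fin6 d)
  have e1 : typeOf (c 0) (c 5) (c 3) (c 2) = typeOf' ↑(d 0) ↑(d 5) ↑(d 3) ↑(d 2) :=
    (typeOf_eq _ _ _ _).trans
      (typeOf'_congr (ciff 0 5) (ciff 0 3) (ciff 0 2) (ciff 5 3) (ciff 5 2) (ciff 3 2))
  have e2 : typeOf (c 0) (c 4) (c 3) (c 1) = typeOf' ↑(d 0) ↑(d 4) ↑(d 3) ↑(d 1) :=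
    (typeOf_eq _ _ _ _).trans
      (typeOf'_congr (ciff 0 4) (ciff 0 3) (ciff 0 1) (ciff 4 3) (ciff 4 1) (ciff 3 1))
  have e3 : typeOf (c 1) (c 5) (c 4) (c 2) = typeOf' ↑(d 1) ↑(d 5) ↑(d 4) ↑(d 2) :=
    (typeOf_eq _ _ _ _).trans
      (typeOf'_congr (ciff 1 5) (ciff 1 4) (ciff 1 2) (ciff 5 4) (ciff 5 2) (ciff 4 2))
  have hT : T = ({typeOf' ↑(d 0) ↑(d 5) ↑(d 3) ↑(d 2), typeOf' ↑(d 0) ↑(d 4) ↑(d 3) ↑(d 1),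
      typeOf' ↑(d 1) ↑(d 5) ↑(d 4) ↑(d 2)} : Multiset SqT) := by
    show ({typeOf (c 0) (c 5) (c 3) (c 2), typeOf (c 0) (c 4) (c 3) (c 1),
      typeOf (c 1) (c 5) (c 4) (c 2)} : Multiset SqT) = _
    rw [e1, e2, e3]
  rw [hn, hT]
  exact ⟨H1, H2, H3, H4, H5⟩
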